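/- Let X = {x_1, …, x_p} be a finite set and let S_1, …, S_m ⊆ X with |S_i| = 3 for every i. Consider the candidate set C = {s_1, …, s_m} ∪ {w_1, w_2}, where candidate s_i corresponds to the set S_i, and the 3VA partial profile consisting of: for each x ∈ X, a voter v_x with Top(v_x) = {s_i : x ∉ S_i}, Middle(v_x) = {w_1, w_2}, and Bottom(v_x) = {s_i : x ∈ S_i}; together with six voters with empty Middle: three voters with Top = {s_1, …, s_m}, two voters with Top = {w_1}, and one voter with Top = {w_2}. Then {w_1, w_2} is a possible committee of size 2 under Chamberlin–Courant if and only if there exists a subset B ⊆ X such that |B ∩ S_i| = 1 for every i ∈ {1, …, m}. -/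

import Mathlib

open Finset

/-- The Chamberlin–Courant weight function: `w 0 = 0` and `w x = 1` for `x ≥ 1`. -/
def wCC : ℕ → ℚ := fun x => if x = 0 then 0 else 1

/-- The `w`-Thiele score of a set `S` under approval profile `A`. -/
def thieleScore {V C : Type*} [Fintype V] [DecidableEq C]
    (w : ℕ → ℚ) (A : V → Finset C) (S : Finset C) : ℚ :=
  ∑ v, w ((S ∩ A v).card)

/-- `W` is a winning committee of size `k` under `w`-Thiele in `A`. -/
def IsWinning {V C : Type*} [Fintype V] [DecidableEq C]
    (w : ℕ → ℚ) (k : ℕ) (A : V → Finset C) (W : Finset C) : Prop :=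
  W.card = k ∧ ∀ W' : Finset C, W'.card = k → thieleScore w A W' ≤ thieleScore w A W

/-- `A` is a completion of the 3VA partial profile given by `Top` and `Mid`:
each voter approves `Top v` together with an arbitrary subset of `Mid v`. -/
def Is3VACompletion {V C : Type*} [DecidableEq C]
    (Top Mid : V → Finset C) (A : V → Finset C) : Prop :=
  ∀ v, Top v ⊆ A v ∧ A v ⊆ Top v ∪ Mid v

/-- The `Top` sets of the reduction profile.  Candidate `Sum.inl i` is the
candidate `s i` corresponding to the set `S i`; candidates `Sum.inr 0` and
`Sum.inr 1` are `w₁` and `w₂`.  Voter `Sum.inl x` is the voter `v_x` for the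
element `x`; voters `Sum.inr j` are the six voters without uncertainty:
three approving all of `s 1, …, s m`, two approving `w₁` and one approving `w₂`. -/
def redTop {X : Type*} [Fintype X] [DecidableEq X] {m : ℕ} (S : Fin m → Finset X) :
    X ⊕ Fin 6 → Finset (Fin m ⊕ Fin 2)
  | Sum.inl x => (Finset.univ.filter (fun i => x ∉ S i)).image Sum.inl
  | Sum.inr j =>
      if j.val < 3 then Finset.univ.image (Sum.inl : Fin m → Fin m ⊕ Fin 2)
      else if j.val < 5 then {Sum.inr 0}
      else {Sum.inr 1}

/-- The `Middle` sets of the reduction profile: voter `v_x` is undecided about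
`w₁` and `w₂`, the six remaining voters have no uncertainty. -/
def redMid {X : Type*} {m : ℕ} : X ⊕ Fin 6 → Finset (Fin m ⊕ Fin 2)
  | Sum.inl _ => {Sum.inr 0, Sum.inr 1}
  | Sum.inr _ => ∅

/-!
Under Chamberlin–Courant a committee scores the number of voters approving at least one of its
members, so it wins exactly when it leaves the fewest voters unrepresented. The six fixed voters
leave 3 unrepresented by `{w₁, w₂}`, 1 by `{sᵢ, w₁}` and 2 by `{sᵢ, w₂}`.

If `{w₁, w₂}` wins in a completion, let `P`, `Q` be the elements whose voters approve `w₁`, `w₂`,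
and `d` the number of voters `v_x` approving neither. Comparing with `{sᵢ, w₁}` and `{sᵢ, w₂}` gives
`d + 2 ≤ |Sᵢ \ P|` and `d + 1 ≤ |Sᵢ \ Q|`, while `|Sᵢ \ P| + |Sᵢ \ Q| ≤ |Sᵢ| + d = 3 + d`;
hence `|Sᵢ \ Q| = 1`, and `B = X \ Q` meets every `Sᵢ` exactly once.

Conversely, given `B`, let `v_x` approve `w₁` if `x ∈ B` and `w₂` otherwise. Then `{w₁, w₂}` leaves
exactly the 3 fixed voters of the `sᵢ` unrepresented, `{sᵢ, w₁}` the 2 voters of `Sᵢ \ B` and one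
fixed voter, `{sᵢ, w₂}` the voter of `Sᵢ ∩ B` and two fixed voters, and every other pair at least
3 fixed voters.
-/

section ChamberlinCourant

variable {V C : Type*} [Fintype V] [DecidableEq C]

def ccMisses (A : V → Finset C) (W : Finset C) : ℕ := #{v | Disjoint W (A v)}

theorem thieleScore_wCC (A : V → Finset C) (W : Finset C) :
    thieleScore wCC A W = Fintype.card V - ccMisses A W := by
  have h : ∀ v, wCC #(W ∩ A v) = 1 - if Disjoint W (A v) then 1 else 0 := by
    intro v
    simp only [wCC, card_eq_zero, ← disjoint_iff_inter_eq_empty]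
    split_ifs <;> norm_num
  simp only [thieleScore, h, sum_sub_distrib, sum_const, card_univ, ccMisses, sum_boole,
    nsmul_eq_mul, mul_one]

theorem isWinning_wCC_iff {k : ℕ} {A : V → Finset C} {W : Finset C} :
    IsWinning wCC k A W ↔ #W = k ∧ ∀ W', #W' = k → ccMisses A W ≤ ccMisses A W' := by
  simp only [IsWinning, thieleScore_wCC, sub_le_sub_iff_left, Nat.cast_le]

theorem ccMisses_sum {V₁ V₂ : Type*} [Fintype V₁] [Fintype V₂] (A : V₁ ⊕ V₂ → Finset C)
    (W : Finset C) :
    ccMisses A W = #{v | Disjoint W (A (.inl v))} + #{v | Disjoint W (A (.inr v))} := by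
  simp only [ccMisses, card_filter, Fintype.sum_sum_type]

end ChamberlinCourant

theorem card_filter_not_add_card_filter_not_le {α : Type*} [DecidableEq α] (s : Finset α)
    (p q : α → Prop) [DecidablePred p] [DecidablePred q] :
    #{x ∈ s | ¬p x} + #{x ∈ s | ¬q x} ≤ #s + #{x ∈ s | ¬p x ∧ ¬q x} := by
  rw [← card_union_add_card_inter, ← filter_or, ← filter_and]
  exact Nat.add_le_add_right (card_filter_le _ _) _

section Reduction

variable {X : Type*} [Fintype X] [DecidableEq X] {m : ℕ} {S : Fin m → Finset X}

theorem card_filter_disjoint_redTop_inr (W : Finset (Fin m ⊕ Fin 2)) :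
    #{j | Disjoint W (redTop S (.inr j))} =
      (if ∃ i, .inl i ∈ W then 0 else 3) + (if .inr 0 ∈ W then 0 else 2) +
        (if .inr 1 ∈ W then 0 else 1) := by
  have hs : Disjoint W (univ.image .inl) ↔ ¬∃ i, .inl i ∈ W := by
    simp [disjoint_right]
  rw [card_filter, Fin.sum_univ_six]
  simp only [redTop, hs, disjoint_singleton_right, Fin.isValue, Fin.coe_ofNat_eq_mod, Nat.reduceMod,
    Nat.reduceLT, ↓reduceIte, ite_not]
  split_ifs <;> simp_all

namespace Is3VACompletion

variable {A : X ⊕ Fin 6 → Finset (Fin m ⊕ Fin 2)}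

theorem apply_inr (hA : Is3VACompletion (redTop S) redMid A) (j : Fin 6) :
    A (.inr j) = redTop S (.inr j) :=
  subset_antisymm (by simpa [redMid] using (hA (.inr j)).2) (hA (.inr j)).1

theorem inl_mem_iff (hA : Is3VACompletion (redTop S) redMid A) (x : X) (i : Fin m) :
    .inl i ∈ A (.inl x) ↔ x ∉ S i :=
  ⟨fun h => by simpa [redTop, redMid] using (hA (.inl x)).2 h,
    fun h => (hA (.inl x)).1 (by simp [redTop, h])⟩

theorem ccMisses_inr_pair (hA : Is3VACompletion (redTop S) redMid A) :
    ccMisses A {.inr 0, .inr 1} = #{x | .inr 0 ∉ A (.inl x) ∧ .inr 1 ∉ A (.inl x)} + 3 := by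
  simp only [ccMisses_sum, hA.apply_inr, card_filter_disjoint_redTop_inr]
  simp [disjoint_insert_left]

theorem ccMisses_inl_pair (hA : Is3VACompletion (redTop S) redMid A) (i : Fin m) (k : Fin 2) :
    ccMisses A {.inl i, .inr k} = #{x ∈ S i | .inr k ∉ A (.inl x)} + (k + 1) := by
  simp only [ccMisses_sum, hA.apply_inr, card_filter_disjoint_redTop_inr]
  congr 1
  · congr 1
    ext x
    simp [disjoint_insert_left, hA.inl_mem_iff]
  · fin_cases k <;> simp

end Is3VACompletion

theorem exists_exactHittingSet_of_isWinning (hS : ∀ i, #(S i) = 3)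
    {A : X ⊕ Fin 6 → Finset (Fin m ⊕ Fin 2)} (hA : Is3VACompletion (redTop S) redMid A)
    (hW : IsWinning wCC 2 A {.inr 0, .inr 1}) :
    ∃ B : Finset X, ∀ i, #(B ∩ S i) = 1 := by
  refine ⟨({x | .inr 1 ∉ A (.inl x)} : Finset X), fun i => ?_⟩
  have hmin := (isWinning_wCC_iff.mp hW).2
  have h₀ := hmin {.inl i, .inr 0} (card_pair (by simp))
  have h₁ := hmin {.inl i, .inr 1} (card_pair (by simp))
  rw [hA.ccMisses_inr_pair, hA.ccMisses_inl_pair] at h₀ h₁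
  have hsub : #{x ∈ S i | .inr 0 ∉ A (.inl x) ∧ .inr 1 ∉ A (.inl x)} ≤
      #{x | .inr 0 ∉ A (.inl x) ∧ .inr 1 ∉ A (.inl x)} :=
    card_le_card (filter_subset_filter _ (subset_univ _))
  have hsplit := card_filter_not_add_card_filter_not_le (S i)
    (fun x => .inr 0 ∈ A (.inl x)) (fun x => .inr 1 ∈ A (.inl x))
  rw [filter_inter, univ_inter]
  simp only [hS i, Fin.isValue, Fin.val_zero, Fin.val_one] at h₀ h₁ hsplit
  omega

def hittingSetCompletion (S : Fin m → Finset X) (B : Finset X) :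
    X ⊕ Fin 6 → Finset (Fin m ⊕ Fin 2)
  | .inl x => insert (if x ∈ B then .inr 0 else .inr 1) (redTop S (.inl x))
  | .inr j => redTop S (.inr j)

theorem inr_zero_mem_hittingSetCompletion {B : Finset X} {x : X} :
    .inr 0 ∈ hittingSetCompletion S B (.inl x) ↔ x ∈ B := by
  by_cases hx : x ∈ B <;> simp [hittingSetCompletion, redTop, hx]

theorem inr_one_mem_hittingSetCompletion {B : Finset X} {x : X} :
    .inr 1 ∈ hittingSetCompletion S B (.inl x) ↔ x ∉ B := by
  by_cases hx : x ∈ B <;> simp [hittingSetCompletion, redTop, hx]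

theorem is3VACompletion_hittingSetCompletion (B : Finset X) :
    Is3VACompletion (redTop S) redMid (hittingSetCompletion S B) := by
  rintro (x | j)
  · refine ⟨subset_insert _ _, insert_subset ?_ subset_union_left⟩
    split_ifs <;> simp [redMid]
  · exact ⟨subset_rfl, subset_union_left⟩

theorem ccMisses_hittingSetCompletion_inr_pair (B : Finset X) :
    ccMisses (hittingSetCompletion S B) {.inr 0, .inr 1} = 3 := by
  rw [(is3VACompletion_hittingSetCompletion B).ccMisses_inr_pair]
  simp [inr_zero_mem_hittingSetCompletion, inr_one_mem_hittingSetCompletion]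

theorem three_le_ccMisses_hittingSetCompletion (hS : ∀ i, #(S i) = 3) {B : Finset X}
    (hB : ∀ i, #(B ∩ S i) = 1) {W : Finset (Fin m ⊕ Fin 2)} (hW : #W = 2) :
    3 ≤ ccMisses (hittingSetCompletion S B) W := by
  have hA := is3VACompletion_hittingSetCompletion (S := S) B
  by_cases hfix : 3 ≤ #{j | Disjoint W (redTop S (.inr j))}
  · rw [ccMisses_sum]
    exact le_add_left hfix
  rw [card_filter_disjoint_redTop_inr] at hfix
  obtain ⟨i, hi⟩ : ∃ i, .inl i ∈ W := by
    by_contra h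
    rw [if_neg h] at hfix
    split_ifs at hfix <;> omega
  have hw : .inr 0 ∈ W ∨ .inr 1 ∈ W := by
    by_contra h
    rw [not_or] at h
    rw [if_neg h.1, if_neg h.2] at hfix
    omega
  have hpair {k : Fin 2} (hk : .inr k ∈ W) : W = {.inl i, .inr k} :=
    (eq_of_subset_of_card_le (insert_subset hi (singleton_subset_iff.2 hk))
      (by rw [hW, card_pair (by simp)])).symm
  rcases hw with hw | hw <;> rw [hpair hw, hA.ccMisses_inl_pair]
  · have hdiff := card_sdiff_add_card_inter (S i) B
    rw [hS i, inter_comm, hB i] at hdiff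
    simp only [inr_zero_mem_hittingSetCompletion, filter_notMem_eq_sdiff]
    omega
  · simp only [inr_one_mem_hittingSetCompletion, not_not, filter_mem_eq_inter, inter_comm, hB i]
    rfl

theorem isWinning_hittingSetCompletion (hS : ∀ i, #(S i) = 3) {B : Finset X}
    (hB : ∀ i, #(B ∩ S i) = 1) :
    IsWinning wCC 2 (hittingSetCompletion S B) {.inr 0, .inr 1} := by
  refine isWinning_wCC_iff.mpr ⟨card_pair (by simp), fun W hW => ?_⟩
  rw [ccMisses_hittingSetCompletion_inr_pair]
  exact three_le_ccMisses_hittingSetCompletion hS hB hW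

end Reduction

theorem stmt6 {X : Type*} [Fintype X] [DecidableEq X]
    (m : ℕ) (S : Fin m → Finset X) (hS : ∀ i, (S i).card = 3) :
    (∃ A : X ⊕ Fin 6 → Finset (Fin m ⊕ Fin 2),
        Is3VACompletion (redTop S) redMid A ∧
        IsWinning wCC 2 A {Sum.inr 0, Sum.inr 1}) ↔
    (∃ B : Finset X, ∀ i : Fin m, (B ∩ S i).card = 1) := by
  refine ⟨fun ⟨A, hA, hW⟩ => exists_exactHittingSet_of_isWinning hS hA hW, fun ⟨B, hB⟩ => ?_⟩
  exact ⟨hittingSetCompletion S B, is3VACompletion_hittingSetCompletion B,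
    isWinning_hittingSetCompletion hS hB⟩
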